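/- arXiv:1806.08125 — 2 statements merged into one kernel-verified Lean document; each statement's English description precedes it below -/
import Mathlib

section
/- Let Φ : ℝ → (V → V) be a one-parameter group of linear isomorphisms of a finite-dimensional normed space V, and suppose there exist C, β > 0 and a splitting V = Eᵤ ⊕ Eₛ invariant under each Φ_t such that ‖Φ_t(ξₛ)‖ ≤ C e^{-βt}‖ξₛ‖ for all ξₛ ∈ Eₛ and ‖Φ_t(ξᵤ)‖ ≥ C⁻¹ e^{βt}‖ξᵤ‖ for all ξᵤ ∈ Eᵤ and t ≥ 0. Then for every ε > 0 there exists T > 0 such that for every unit vector ξ = ξᵤ + ξₛ with ‖ξᵤ‖ > ε and every t ≥ T, the distance from Φ_t(ξ)/‖Φ_t(ξ)‖ to Eᵤ is at most ε. -/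
/-! Write `ξ = ξᵤ + ξₛ` and `Φ_t ξ = Φ_t ξᵤ + Φ_t ξₛ` with `Φ_t ξᵤ ∈ Eᵤ`. The normalised vector lies
within `‖Φ_t ξₛ‖ / ‖Φ_t ξ‖` of `Eᵤ`, and this ratio is small as soon as `‖Φ_t ξₛ‖` is a small
multiple of `‖Φ_t ξᵤ‖`. The contraction/expansion bounds give
`‖Φ_t ξₛ‖ / ‖Φ_t ξᵤ‖ ≤ C² e^{-2βt} ‖ξₛ‖ / ‖ξᵤ‖`, and `‖ξₛ‖ / ‖ξᵤ‖ ≤ (1 + ‖ξᵤ‖) / ‖ξᵤ‖ < 1 + 1/ε`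
is bounded uniformly once `‖ξᵤ‖ > ε`. -/

open Metric Real

theorem norm_le_mul_norm_add_of_mul_le {E : Type*} [SeminormedAddGroup E] {u s : E} {ε : ℝ}
    (hε : 0 ≤ ε) (h : (1 + ε) * ‖s‖ ≤ ε * ‖u‖) : ‖s‖ ≤ ε * ‖u + s‖ := by
  have htri : ‖u‖ ≤ ‖u + s‖ + ‖s‖ := by
    simpa only [add_sub_cancel_right] using norm_sub_le (u + s) s
  nlinarith

section NormalizedDistance

variable {E : Type*} [SeminormedAddCommGroup E] [NormedSpace ℝ E]

theorem infDist_inv_norm_smul_add_le_div (W : Submodule ℝ E) {u s : E} (hu : u ∈ W) :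
    infDist (‖u + s‖⁻¹ • (u + s)) (W : Set E) ≤ ‖s‖ / ‖u + s‖ :=
  calc infDist (‖u + s‖⁻¹ • (u + s)) (W : Set E)
      ≤ dist (‖u + s‖⁻¹ • (u + s)) (‖u + s‖⁻¹ • u) :=
        infDist_le_dist_of_mem (W.smul_mem _ hu)
    _ = ‖s‖ / ‖u + s‖ := by
        rw [dist_eq_norm, ← smul_sub, add_sub_cancel_left, norm_smul, norm_inv, norm_norm,
          inv_mul_eq_div]

theorem infDist_inv_norm_smul_add_le_of_mul_le (W : Submodule ℝ E) {u s : E} (hu : u ∈ W)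
    {ε : ℝ} (hε : 0 ≤ ε) (h : (1 + ε) * ‖s‖ ≤ ε * ‖u‖) :
    infDist (‖u + s‖⁻¹ • (u + s)) (W : Set E) ≤ ε :=
  (infDist_inv_norm_smul_add_le_div W hu).trans <|
    div_le_of_le_mul₀ (norm_nonneg _) hε (norm_le_mul_norm_add_of_mul_le hε h)

end NormalizedDistance

/-- `a` and `b` stand for `‖Φ_t ξₛ‖` and `‖Φ_t ξᵤ‖`, `σ` and `μ` for `‖ξₛ‖` and `‖ξᵤ‖`,
and `L` for `e^{βt}`. -/
theorem one_add_mul_le_mul_of_contract_expand {a b σ μ C L ε : ℝ} (hC : 0 < C) (hL : 0 < L)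
    (hε : 0 < ε) (ha : a ≤ C * L⁻¹ * σ) (hb : C⁻¹ * L * μ ≤ b) (hσ : σ ≤ 1 + μ) (hμ : ε < μ)
    (hgap : (1 + ε) * C ≤ ε * L) :
    (1 + ε) * a ≤ ε * b := by
  have hσμ : ε * σ ≤ (1 + ε) * μ := by nlinarith
  have hcross : (1 + ε) * (C * σ) * C ≤ ε * (L * μ) * L := by
    have : ε * ((1 + ε) * (C * σ) * C) ≤ ε * (ε * (L * μ) * L) := by
      calc ε * ((1 + ε) * (C * σ) * C) = (1 + ε) * C ^ 2 * (ε * σ) := by ring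
        _ ≤ (1 + ε) * C ^ 2 * ((1 + ε) * μ) := by gcongr
        _ = ((1 + ε) * C) ^ 2 * μ := by ring
        _ ≤ (ε * L) ^ 2 * μ := by gcongr; linarith
        _ = ε * (ε * (L * μ) * L) := by ring
    exact le_of_mul_le_mul_left this hε
  calc (1 + ε) * a ≤ (1 + ε) * (C * σ / L) := by
        gcongr; simpa only [mul_right_comm, div_eq_mul_inv] using ha
    _ ≤ ε * (L * μ / C) := by
        rw [mul_div_assoc', mul_div_assoc', div_le_div_iff₀ hL hC]; exact hcross
    _ ≤ ε * b := by
        gcongr; simpa only [mul_right_comm, div_eq_mul_inv, mul_comm C⁻¹] using hb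

theorem stmt_2_general (V : Type*) [NormedAddCommGroup V] [NormedSpace ℝ V]
    (Φ : ℝ → V ≃L[ℝ] V)
    (Eu Es : Submodule ℝ V)
    (hinvu : ∀ t : ℝ, ∀ ξ ∈ Eu, Φ t ξ ∈ Eu)
    (C β : ℝ) (hC : 0 < C) (hβ : 0 < β)
    (hs : ∀ t : ℝ, 0 ≤ t → ∀ ξs ∈ Es, ‖Φ t ξs‖ ≤ C * Real.exp (-β * t) * ‖ξs‖)
    (hu : ∀ t : ℝ, 0 ≤ t → ∀ ξu ∈ Eu, C⁻¹ * Real.exp (β * t) * ‖ξu‖ ≤ ‖Φ t ξu‖) :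
    ∀ ε > (0:ℝ), ∃ T > (0:ℝ), ∀ ξu ∈ Eu, ∀ ξs ∈ Es, ‖ξu + ξs‖ = 1 → ε < ‖ξu‖ →
      ∀ t : ℝ, T ≤ t →
        Metric.infDist ((‖Φ t (ξu + ξs)‖)⁻¹ • Φ t (ξu + ξs)) (Eu : Set V) ≤ ε := by
  intro ε hε
  -- `e^{βt} ≥ βt` makes `e^{βt} ≥ (1 + ε) C / ε` once `t ≥ T`
  refine ⟨(1 + ε) * C / (ε * β), by positivity, ?_⟩
  intro ξu hξu ξs hξs hnorm hεu t ht
  have ht0 : 0 ≤ t := (by positivity : (0 : ℝ) ≤ (1 + ε) * C / (ε * β)).trans ht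
  have hgap : (1 + ε) * C ≤ ε * exp (β * t) := by
    have hexp := add_one_le_exp (β * t)
    rw [div_le_iff₀ (by positivity)] at ht
    nlinarith
  have hσ : ‖ξs‖ ≤ 1 + ‖ξu‖ := by
    simpa only [hnorm, add_sub_cancel_left] using norm_sub_le (ξu + ξs) ξu
  have hstable := hs t ht0 ξs hξs
  rw [neg_mul, exp_neg] at hstable
  rw [map_add]
  exact infDist_inv_norm_smul_add_le_of_mul_le Eu (hinvu t ξu hξu) hε.le <|
    one_add_mul_le_mul_of_contract_expand hC (exp_pos _) hε hstable (hu t ht0 ξu hξu) hσ hεu hgap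

/-- Under a hyperbolic splitting `V = Eᵤ ⊕ Eₛ` for a one-parameter group `Φ` of linear
isomorphisms, unit vectors with unstable component of size `> ε` converge projectively to
`Eᵤ`, uniformly in time. -/
theorem stmt_2 (V : Type*) [NormedAddCommGroup V] [NormedSpace ℝ V]
    [FiniteDimensional ℝ V]
    (Φ : ℝ → V ≃L[ℝ] V)
    (hgrp : ∀ s t : ℝ, ∀ ξ : V, Φ (s + t) ξ = Φ s (Φ t ξ))
    (hid : ∀ ξ : V, Φ 0 ξ = ξ)
    (Eu Es : Submodule ℝ V) (hcompl : IsCompl Eu Es)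
    (hinvu : ∀ t : ℝ, ∀ ξ ∈ Eu, Φ t ξ ∈ Eu)
    (hinvs : ∀ t : ℝ, ∀ ξ ∈ Es, Φ t ξ ∈ Es)
    (C β : ℝ) (hC : 0 < C) (hβ : 0 < β)
    (hs : ∀ t : ℝ, 0 ≤ t → ∀ ξs ∈ Es, ‖Φ t ξs‖ ≤ C * Real.exp (-β * t) * ‖ξs‖)
    (hu : ∀ t : ℝ, 0 ≤ t → ∀ ξu ∈ Eu, C⁻¹ * Real.exp (β * t) * ‖ξu‖ ≤ ‖Φ t ξu‖) :
    ∀ ε > (0:ℝ), ∃ T > (0:ℝ), ∀ ξu ∈ Eu, ∀ ξs ∈ Es, ‖ξu + ξs‖ = 1 → ε < ‖ξu‖ →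
      ∀ t : ℝ, T ≤ t →
        Metric.infDist ((‖Φ t (ξu + ξs)‖)⁻¹ • Φ t (ξu + ξs)) (Eu : Set V) ≤ ε :=
  stmt_2_general V Φ Eu Es hinvu C β hC hβ hs hu
end

section
/- Let M be a compact metric space, m₀ : M → [0,1] continuous, φ a continuous flow on M, and T > 0. Suppose that for every x ∈ M: (i) if m₀(x) ∈ (0,1) then m₀(φ_T(x)) = 1 and m₀(φ_{−T}(x)) = 0; (ii) if m₀(x) = 0 then m₀(φ_{−t}(x)) = 0 for all t ∈ [0,T], and m₀(φ_T(x)) = 0; (iii) if m₀(x) = 1 then m₀(φ_t(x)) = 1 for all t ∈ [0,T], and m₀(φ_{−T}(x)) = 1. Define m(x) = ∫_{−T}^{T} m₀(φ_t(x)) dt and F(x) = m₀(φ_T(x)) − m₀(φ_{−T}(x)). Then for every x with F(x) = 0, either m(x) < T or m(x) > T; in particular m(x) ≠ T. -/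
/-!
Where `F` vanishes, hypothesis (i) rules out `0 < m₀ x < 1`. If `m₀ x = 0`, the weight along the
orbit vanishes on `[-T, 0]` and is at most `1` on `[0, T]`, with strict inequality at `t = 0`,
so `m x < T`. If `m₀ x = 1`, it equals `1` on `[0, T]` and is positive at `t = 0`, so `m x > T`.
-/

open Set intervalIntegral

section

variable {g : ℝ → ℝ} {T : ℝ}

theorem integral_lt_of_eq_zero_left_of_le_one (hT : 0 < T) (hg : Continuous g)
    (hzero : ∀ t ∈ Icc (-T) 0, g t = 0) (hle : ∀ t ∈ Icc 0 T, g t ≤ 1) :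
    ∫ t in (-T)..T, g t < T := by
  have hleft : ∫ t in (-T)..0, g t = 0 := by
    rw [integral_congr (g := fun _ => 0)
      fun t ht => hzero t (by rwa [uIcc_of_le (by linarith)] at ht)]
    simp
  have hright : ∫ t in (0 : ℝ)..T, g t < ∫ _ in (0 : ℝ)..T, (1 : ℝ) :=
    integral_lt_integral_of_continuousOn_of_le_of_exists_lt hT hg.continuousOn continuousOn_const
      (fun t ht => hle t (Ioc_subset_Icc_self ht))
      ⟨0, left_mem_Icc.2 hT.le, by rw [hzero 0 ⟨by linarith, le_rfl⟩]; exact one_pos⟩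
  rw [← integral_add_adjacent_intervals (hg.intervalIntegrable _ _) (hg.intervalIntegrable _ _),
    hleft, zero_add]
  simpa using hright

/-- The reflection `t ↦ 1 - g (-t)` turns this into `integral_lt_of_eq_zero_left_of_le_one`. -/
theorem lt_integral_of_eq_one_right_of_nonneg (hT : 0 < T) (hg : Continuous g)
    (hone : ∀ t ∈ Icc 0 T, g t = 1) (hnonneg : ∀ t ∈ Icc (-T) 0, 0 ≤ g t) :
    T < ∫ t in (-T)..T, g t := by
  have hgneg : Continuous fun t => g (-t) := hg.comp continuous_neg
  have hrefl : ∫ t in (-T)..T, (1 - g (-t)) < T :=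
    integral_lt_of_eq_zero_left_of_le_one hT (continuous_const.sub hgneg)
      (fun t ht => by rw [hone (-t) ⟨by linarith [ht.2], by linarith [ht.1]⟩, sub_self])
      (fun t ht => by linarith [hnonneg (-t) ⟨by linarith [ht.2], by linarith [ht.1]⟩])
  rw [integral_sub intervalIntegrable_const (hgneg.intervalIntegrable _ _),
    integral_comp_neg (fun t => g t), neg_neg] at hrefl
  simp only [integral_const, smul_eq_mul, mul_one] at hrefl
  linarith

end

theorem stmt_6_general (M : Type*) [MetricSpace M]
    (φ : ℝ → M → M) (hφ : Continuous fun p : ℝ × M => φ p.1 p.2)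
    (m₀ : M → ℝ) (hm₀ : Continuous m₀) (hm₀01 : ∀ x, m₀ x ∈ Set.Icc (0:ℝ) 1)
    (T : ℝ) (hT : 0 < T)
    (h1 : ∀ x : M, m₀ x ∈ Set.Ioo (0:ℝ) 1 → m₀ (φ T x) = 1 ∧ m₀ (φ (-T) x) = 0)
    (h2 : ∀ x : M, m₀ x = 0 →
      (∀ t ∈ Set.Icc (0:ℝ) T, m₀ (φ (-t) x) = 0) ∧ m₀ (φ T x) = 0)
    (h3 : ∀ x : M, m₀ x = 1 →
      (∀ t ∈ Set.Icc (0:ℝ) T, m₀ (φ t x) = 1) ∧ m₀ (φ (-T) x) = 1)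
    (m F : M → ℝ)
    (hm : ∀ x, m x = ∫ t in (-T)..T, m₀ (φ t x))
    (hF : ∀ x, F x = m₀ (φ T x) - m₀ (φ (-T) x)) :
    ∀ x : M, F x = 0 → (m x < T ∨ T < m x) ∧ m x ≠ T := by
  intro x hFx
  have horbit : Continuous fun t => m₀ (φ t x) := hm₀.comp (hφ.comp (Continuous.prodMk_left x))
  suffices m x < T ∨ T < m x from ⟨this, this.elim ne_of_lt ne_of_gt⟩
  rw [hm]
  rcases (hm₀01 x).1.eq_or_lt with hzero | hpos
  · refine .inl (integral_lt_of_eq_zero_left_of_le_one hT horbit (fun t ht => ?_)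
      fun t _ => (hm₀01 _).2)
    simpa using (h2 x hzero.symm).1 (-t) ⟨by linarith [ht.2], by linarith [ht.1]⟩
  rcases (hm₀01 x).2.eq_or_lt with hone | hlt
  · exact .inr (lt_integral_of_eq_one_right_of_nonneg hT horbit (h3 x hone).1
      fun t _ => (hm₀01 _).1)
  · obtain ⟨hfwd, hbwd⟩ := h1 x ⟨hpos, hlt⟩
    rw [hF, hfwd, hbwd] at hFx
    norm_num at hFx

/-- The dichotomy at critical points of the averaged weight: if
`F(x) = m₀(φ_T x) - m₀(φ_{-T} x)` vanishes, then `m(x) = ∫_{-T}^T m₀(φ_t x) dt`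
satisfies `m(x) < T` or `m(x) > T`; in particular `m(x) ≠ T`. -/
theorem stmt_6 (M : Type*) [MetricSpace M] [CompactSpace M]
    (φ : ℝ → M → M) (hφ : Continuous fun p : ℝ × M => φ p.1 p.2)
    (hflow : ∀ s t : ℝ, ∀ x : M, φ (s + t) x = φ s (φ t x))
    (hφ0 : ∀ x : M, φ 0 x = x)
    (m₀ : M → ℝ) (hm₀ : Continuous m₀) (hm₀01 : ∀ x, m₀ x ∈ Set.Icc (0:ℝ) 1)
    (T : ℝ) (hT : 0 < T)
    (h1 : ∀ x : M, m₀ x ∈ Set.Ioo (0:ℝ) 1 → m₀ (φ T x) = 1 ∧ m₀ (φ (-T) x) = 0)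
    (h2 : ∀ x : M, m₀ x = 0 →
      (∀ t ∈ Set.Icc (0:ℝ) T, m₀ (φ (-t) x) = 0) ∧ m₀ (φ T x) = 0)
    (h3 : ∀ x : M, m₀ x = 1 →
      (∀ t ∈ Set.Icc (0:ℝ) T, m₀ (φ t x) = 1) ∧ m₀ (φ (-T) x) = 1)
    (m F : M → ℝ)
    (hm : ∀ x, m x = ∫ t in (-T)..T, m₀ (φ t x))
    (hF : ∀ x, F x = m₀ (φ T x) - m₀ (φ (-T) x)) :
    ∀ x : M, F x = 0 → (m x < T ∨ T < m x) ∧ m x ≠ T :=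
  stmt_6_general M φ hφ m₀ hm₀ hm₀01 T hT h1 h2 h3 m F hm hF
end
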